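/- Let s be a Steinitz number. Then Spec(H(∞) ⊗ H(s)) = S(∞,s), where S(∞,s) = { (a/b)·s : a ∈ ℕ, b ∈ Ω(s) }. -/

import Mathlib

open scoped BigOperators

noncomputable section

/-! ### Steinitz numbers -/

/-- A Steinitz number: a formal product `∏ p ^ r_p` over all primes, with exponents
`r_p ∈ ℕ ∪ {∞}`, encoded as the function sending each prime to its exponent. -/
def SteinitzNumber : Type := Nat.Primes → ℕ∞

namespace SteinitzNumber

instance : One SteinitzNumber := ⟨fun _ => 0⟩

instance : Mul SteinitzNumber := ⟨fun s t p => s p + t p⟩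

/-- The Steinitz number associated with a positive integer `n`. -/
def ofNat (n : ℕ) : SteinitzNumber := fun p => (n.factorization p : ℕ∞)

/-- `b ∈ Ω(s)`: the positive integer `b` divides the Steinitz number `s`. -/
def NatDvd (b : ℕ) (s : SteinitzNumber) : Prop :=
  0 < b ∧ ∀ p : Nat.Primes, (b.factorization p : ℕ∞) ≤ s p

/-- The quotient `s / b` of a Steinitz number by a positive integer dividing it. -/
def divNat (s : SteinitzNumber) (b : ℕ) : SteinitzNumber :=
  fun p => s p - (b.factorization p : ℕ∞)

/-- An infinite Steinitz number is one which is not a positive integer. -/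
def Infinite (s : SteinitzNumber) : Prop := ∀ n : ℕ, s ≠ ofNat n

/-- Steinitz numbers `s` and `t` are rationally connected: `t = (a/b)·s` for positive
integers `a, b` (expressed by cross multiplication). -/
def RationallyConnected (s t : SteinitzNumber) : Prop :=
  ∃ a b : ℕ, 0 < a ∧ 0 < b ∧ ofNat b * t = ofNat a * s

/-- `s₁` finitely divides `s₂`: `s₁ = s₂ / b` for some `b ∈ Ω(s₂)`. -/
def FinDvd (s₁ s₂ : SteinitzNumber) : Prop :=
  ∃ b : ℕ, NatDvd b s₂ ∧ ofNat b * s₁ = s₂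

/-- `s₁ ≤ s₂` iff `s₁ = (a/b)·s₂` with `b ∈ Ω(s₂)` and `1 ≤ a ≤ b`. -/
def Le (s₁ s₂ : SteinitzNumber) : Prop :=
  ∃ a b : ℕ, 0 < a ∧ a ≤ b ∧ NatDvd b s₂ ∧ ofNat b * s₁ = ofNat a * s₂

/-- A saturated set of Steinitz numbers. -/
def Saturated (S : Set SteinitzNumber) : Prop :=
  (∀ s₁ ∈ S, ∀ s₂ ∈ S, RationallyConnected s₁ s₂) ∧
  (∀ s₂ ∈ S, ∀ s₁, FinDvd s₁ s₂ → s₁ ∈ S) ∧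
  (∀ s ∈ S, ∀ n : ℕ, ofNat n * s ∈ S → ∀ k : ℕ, 1 ≤ k → k ≤ n → ofNat k * s ∈ S)

/-- `S(∞, s) = { (a/b)·s : a ∈ ℕ, b ∈ Ω(s) }`. -/
def SInf (s : SteinitzNumber) : Set SteinitzNumber :=
  {t | ∃ a b : ℕ, 0 < a ∧ NatDvd b s ∧ ofNat b * t = ofNat a * s}

/-- `S(r, s) = { (a/b)·s : a, b ∈ ℕ, b ∈ Ω(s), a ≤ r·b }`. -/
def SBdd (r : ℝ) (s : SteinitzNumber) : Set SteinitzNumber :=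
  {t | ∃ a b : ℕ, 0 < a ∧ NatDvd b s ∧ (a : ℝ) ≤ r * b ∧ ofNat b * t = ofNat a * s}

/-- `S⁺(r, s) = { (a/b)·s : a, b ∈ ℕ, b ∈ Ω(s), a < r·b }`. -/
def SBddPlus (r : ℝ) (s : SteinitzNumber) : Set SteinitzNumber :=
  {t | ∃ a b : ℕ, 0 < a ∧ NatDvd b s ∧ (a : ℝ) < r * b ∧ ofNat b * t = ofNat a * s}

end SteinitzNumber

/-! ### Measure algebras -/

/-- A measure algebra: a Boolean algebra (an associative, commutative algebra over `𝔽₂`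
in which every element is idempotent) equipped with a measure `μ` which is positive on
nonzero elements and additive on orthogonal pairs. -/
structure MeasureAlgebra : Type 1 where
  carrier : Type
  [ring : NonUnitalCommRing carrier]
  idem : ∀ x : carrier, x * x = x
  mu : carrier → ℝ
  mu_nonneg : ∀ a, 0 ≤ mu a
  mu_eq_zero_iff : ∀ a, mu a = 0 ↔ a = 0
  mu_add : ∀ a b : carrier, a * b = 0 → mu (a + b) = mu a + mu b

attribute [instance] MeasureAlgebra.ring

namespace MeasureAlgebra

/-- Isomorphism of measure algebras: a Boolean algebra isomorphism preserving the measures. -/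
def Isomorphic (H₁ H₂ : MeasureAlgebra) : Prop :=
  ∃ φ : H₁.carrier ≃+* H₂.carrier, ∀ a, H₂.mu (φ a) = H₁.mu a

/-- Scalar equivalence of measure algebras: a Boolean algebra isomorphism multiplying
the measure by a positive constant `α`. -/
def ScalarEquivalent (H₁ H₂ : MeasureAlgebra) : Prop :=
  ∃ α : ℝ, 0 < α ∧ ∃ φ : H₁.carrier ≃+* H₂.carrier, ∀ a, H₂.mu (φ a) = α * H₁.mu a

/-- The measure subalgebra of a measure algebra supported on a subring, with the
restricted measure. -/
def restrict (H : MeasureAlgebra) (S : NonUnitalSubring H.carrier) : MeasureAlgebra where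
  carrier := S
  idem := fun x => Subtype.ext (H.idem x.1)
  mu := fun x => H.mu x.1
  mu_nonneg := fun a => H.mu_nonneg a.1
  mu_eq_zero_iff := fun a => by
    rw [H.mu_eq_zero_iff a.1]
    exact ⟨fun h => Subtype.ext h, fun h => congrArg Subtype.val h⟩
  mu_add := fun a b hab => H.mu_add a.1 b.1 (congrArg Subtype.val hab)

/-- The standard measure algebra `Stₙ = 𝔽₂ⁿ` with `μ(x₁, …, xₙ) = (x₁ + ⋯ + xₙ)/n`. -/
def St (n : ℕ) : MeasureAlgebra where
  carrier := Fin n → ZMod 2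
  idem := fun x => funext fun i => by
    have h : ∀ a : ZMod 2, a * a = a := by decide
    exact h (x i)
  mu := fun x => (∑ i, ((x i).val : ℝ)) / n
  mu_nonneg := fun a => by positivity
  mu_eq_zero_iff := fun a => by
    constructor
    · intro h
      rcases Nat.eq_zero_or_pos n with hn | hn
      · subst hn; exact funext fun i => i.elim0
      · have hne : ((n : ℝ)) ≠ 0 := by positivity
        have h2 : (∑ i, ((a i).val : ℝ)) = 0 := by
          rcases div_eq_zero_iff.mp h with h' | h'
          · exact h'
          · exact absurd h' hne
        have h3 := (Finset.sum_eq_zero_iff_of_nonneg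
          (fun i _ => by positivity : ∀ i ∈ Finset.univ, (0:ℝ) ≤ ((a i).val : ℝ))).mp h2
        funext i
        have h4 : ((a i).val : ℝ) = 0 := h3 i (Finset.mem_univ i)
        have h5 : (a i).val = 0 := by exact_mod_cast h4
        exact (ZMod.val_eq_zero _).mp h5
    · intro h; subst h; simp
  mu_add := fun a b hab => by
    have key : ∀ u v : ZMod 2, u * v = 0 → (u + v).val = u.val + v.val := by decide
    have h : ∀ i, (((a + b) i).val : ℝ) = ((a i).val : ℝ) + ((b i).val : ℝ) := by
      intro i
      have h0 : a i * b i = 0 := congrFun hab i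
      have h1 := key (a i) (b i) h0
      show (((a i + b i)).val : ℝ) = _
      rw [h1]
      push_cast
      ring
    show (∑ i, (((a + b) i).val : ℝ)) / n
        = (∑ i, ((a i).val : ℝ)) / n + (∑ i, ((b i).val : ℝ)) / n
    rw [← add_div, ← Finset.sum_add_distrib]
    congr 1
    exact Finset.sum_congr rfl fun i _ => h i

/-- A measure algebra is unital if it has an identity element of measure `1`. -/
def Unital (H : MeasureAlgebra) : Prop :=
  ∃ e : H.carrier, (∀ x, e * x = x) ∧ H.mu e = 1

/-- A measure algebra is locally standard if every finite subset is contained in a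
measure subalgebra scalar equivalent to a standard one. -/
def LocallyStandard (H : MeasureAlgebra) : Prop :=
  ∀ t : Finset H.carrier, ∃ (S : NonUnitalSubring H.carrier) (n : ℕ), 0 < n ∧
    (↑t : Set H.carrier) ⊆ S ∧ (H.restrict S).ScalarEquivalent (St n)

/-- For an (idempotent) element `h`, the subring `hH = {x | h·x = x}`. -/
def cornerSubring (H : MeasureAlgebra) (h : H.carrier) : NonUnitalSubring H.carrier where
  carrier := {x | h * x = x}
  zero_mem' := mul_zero h
  add_mem' := by
    intro a b ha hb
    simp only [Set.mem_setOf_eq] at *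
    rw [mul_add, ha, hb]
  neg_mem' := by
    intro a ha
    simp only [Set.mem_setOf_eq] at *
    rw [mul_neg, ha]
  mul_mem' := by
    intro a b ha hb
    simp only [Set.mem_setOf_eq] at *
    rw [← mul_assoc, ha]

/-- The unital measure algebra `H_h = (hH, μ(·)/μ(h))`. -/
def corner (H : MeasureAlgebra) (h : H.carrier) : MeasureAlgebra where
  carrier := H.cornerSubring h
  idem := fun x => Subtype.ext (H.idem x.1)
  mu := fun x => H.mu x.1 / H.mu h
  mu_nonneg := fun a => div_nonneg (H.mu_nonneg a.1) (H.mu_nonneg h)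
  mu_eq_zero_iff := fun a => by
    constructor
    · intro ha
      rcases div_eq_zero_iff.mp ha with h' | h'
      · exact Subtype.ext ((H.mu_eq_zero_iff a.1).mp h')
      · have hh : h = 0 := (H.mu_eq_zero_iff h).mp h'
        have h2 : h * (a : H.carrier) = a := a.2
        apply Subtype.ext
        show (a : H.carrier) = 0
        generalize hx : (a : H.carrier) = x at h2 ⊢
        rw [← h2, hh, zero_mul]
    · intro h'
      subst h'
      have h0 : H.mu ((0 : H.cornerSubring h) : H.carrier) = 0 :=
        (H.mu_eq_zero_iff _).mpr rfl
      show H.mu ((0 : H.cornerSubring h) : H.carrier) / H.mu h = 0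
      rw [h0, zero_div]
  mu_add := fun a b hab => by
    have : H.mu ((a : H.carrier) + b) = H.mu a + H.mu b :=
      H.mu_add a.1 b.1 (congrArg Subtype.val hab)
    show H.mu ((a + b : H.cornerSubring h) : H.carrier) / H.mu h = _
    rw [show ((a + b : H.cornerSubring h) : H.carrier) = (a : H.carrier) + b from rfl,
      this, add_div]

/-- `D(H)`: the set of `n` such that `H` has a subalgebra containing the identity of `H`
and isomorphic to the standard measure algebra `Stₙ`. -/
def D (H : MeasureAlgebra) : Set ℕ :=
  {n | ∃ S : NonUnitalSubring H.carrier,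
    (∃ e ∈ S, ∀ x : H.carrier, e * x = x) ∧ (H.restrict S).Isomorphic (St n)}

/-- The Steinitz number `st(H)` of a (unital locally standard) measure algebra:
the least common multiple of `D(H)`. -/
def st (H : MeasureAlgebra) : SteinitzNumber :=
  fun p => ⨆ n ∈ H.D, (n.factorization p : ℕ∞)

/-- The spectrum of a measure algebra: the set of Steinitz numbers `st(H_h)` for `h ≠ 0`. -/
def Spec (H : MeasureAlgebra) : Set SteinitzNumber :=
  {s | ∃ h : H.carrier, h ≠ 0 ∧ (H.corner h).st = s}

end MeasureAlgebra

/-! ### Concrete models: periodic sequences -/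

/-- A sequence `f : ℕ → 𝔽₂` is periodic with period `k`. -/
def Periodic2 (f : ℕ → ZMod 2) (k : ℕ) : Prop := ∀ i, f (i + k) = f i

theorem Periodic2.of_dvd {f : ℕ → ZMod 2} {k K : ℕ} (h : Periodic2 f k) (hdvd : k ∣ K) :
    Periodic2 f K := by
  obtain ⟨m, rfl⟩ := hdvd
  intro i
  induction m with
  | zero => rfl
  | succ m ih =>
      have he : i + k * (m + 1) = (i + k * m) + k := by ring
      rw [he, h (i + k * m), ih]

theorem SteinitzNumber.natDvd_lcm {k l : ℕ} {s : SteinitzNumber}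
    (hk : SteinitzNumber.NatDvd k s) (hl : SteinitzNumber.NatDvd l s) :
    SteinitzNumber.NatDvd (Nat.lcm k l) s := by
  refine ⟨Nat.lcm_pos hk.1 hl.1, fun p => ?_⟩
  rw [Nat.factorization_lcm hk.1.ne' hl.1.ne', Finsupp.sup_apply]
  rcases le_total ((Nat.factorization k) p) ((Nat.factorization l) p) with h | h
  · rw [sup_eq_right.mpr h]; exact hl.2 p
  · rw [sup_eq_left.mpr h]; exact hk.2 p

/-- The Boolean algebra `𝓗(s)` of `s`-periodic `0,1`-sequences, a concrete model of the
measure algebra `H(s) = ⊗ᵢ St_{pᵢ}` for `s = ∏ᵢ pᵢ`. -/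
def periodicSubring (s : SteinitzNumber) : NonUnitalSubring (ℕ → ZMod 2) where
  carrier := {f | ∃ k : ℕ, SteinitzNumber.NatDvd k s ∧ Periodic2 f k}
  zero_mem' := ⟨1, ⟨one_pos, fun p => by simp⟩, fun i => rfl⟩
  add_mem' := by
    rintro a b ⟨k, hk, hak⟩ ⟨l, hl, hbl⟩
    refine ⟨Nat.lcm k l, SteinitzNumber.natDvd_lcm hk hl, fun i => ?_⟩
    have ha := (hak.of_dvd (Nat.dvd_lcm_left k l)) i
    have hb := (hbl.of_dvd (Nat.dvd_lcm_right k l)) i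
    simp [Pi.add_apply, ha, hb]
  neg_mem' := by
    rintro a ⟨k, hk, hak⟩
    exact ⟨k, hk, fun i => by simp [Pi.neg_apply, hak i]⟩
  mul_mem' := by
    rintro a b ⟨k, hk, hak⟩ ⟨l, hl, hbl⟩
    refine ⟨Nat.lcm k l, SteinitzNumber.natDvd_lcm hk hl, fun i => ?_⟩
    have ha := (hak.of_dvd (Nat.dvd_lcm_left k l)) i
    have hb := (hbl.of_dvd (Nat.dvd_lcm_right k l)) i
    simp [Pi.mul_apply, ha, hb]

theorem exists_pos_period_of_mem {s : SteinitzNumber} {f : ℕ → ZMod 2}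
    (hf : f ∈ periodicSubring s) : ∃ k, 0 < k ∧ Periodic2 f k := by
  obtain ⟨k, hk, hp⟩ := hf
  exact ⟨k, hk.1, hp⟩

open Classical in
/-- The minimal period of a periodic `0,1`-sequence (junk value `1` otherwise). -/
def minPeriod (f : ℕ → ZMod 2) : ℕ :=
  if h : ∃ k, 0 < k ∧ Periodic2 f k then Nat.find h else 1

theorem minPeriod_spec {f : ℕ → ZMod 2} (hf : ∃ k, 0 < k ∧ Periodic2 f k) :
    0 < minPeriod f ∧ Periodic2 f (minPeriod f) := by
  classical
  unfold minPeriod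
  rw [dif_pos hf]
  exact Nat.find_spec hf

/-- The density of `1`s in a periodic `0,1`-sequence: the number of ones in a minimal
period, divided by the length of the period. -/
def density (f : ℕ → ZMod 2) : ℝ :=
  (((Finset.range (minPeriod f)).filter fun i => f i ≠ 0).card : ℝ) / (minPeriod f : ℝ)

theorem density_nonneg (f : ℕ → ZMod 2) : 0 ≤ density f := by
  unfold density; positivity

theorem count_mul_period {f : ℕ → ZMod 2} {k : ℕ} (h : Periodic2 f k) (m : ℕ) :
    ((Finset.range (k * m)).filter fun i => f i ≠ 0).card
      = m * ((Finset.range k).filter fun i => f i ≠ 0).card := by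
  induction m with
  | zero => simp
  | succ m ih =>
      have hmul : k * (m + 1) = k * m + k := by ring
      rw [hmul]
      classical
      rw [Finset.card_filter, Finset.sum_range_add, ← Finset.card_filter, ih]
      have hper : ∀ x, f (k * m + x) = f x := by
        intro x
        have := (h.of_dvd ⟨m, rfl⟩) x
        rw [← this, Nat.add_comm]
      have heq : (∑ x ∈ Finset.range k, if f (k * m + x) ≠ 0 then 1 else 0)
          = ((Finset.range k).filter fun i => f i ≠ 0).card := by
        rw [Finset.card_filter]
        exact Finset.sum_congr rfl fun x _ => by rw [hper x]
      rw [heq]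
      ring

theorem density_eq_div {f : ℕ → ZMod 2} (hf : ∃ k, 0 < k ∧ Periodic2 f k) (m : ℕ) (hm : 0 < m) :
    density f = (((Finset.range (minPeriod f * m)).filter fun i => f i ≠ 0).card : ℝ)
      / ((minPeriod f * m : ℕ) : ℝ) := by
  obtain ⟨hk0, hper⟩ := minPeriod_spec hf
  rw [count_mul_period hper m]
  unfold density
  push_cast
  rw [div_eq_div_iff (by positivity) (by positivity)]
  ring

theorem density_zero : density 0 = 0 := by
  unfold density
  simp

theorem density_eq_zero_iff {f : ℕ → ZMod 2} (hf : ∃ k, 0 < k ∧ Periodic2 f k) :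
    density f = 0 ↔ f = 0 := by
  obtain ⟨hk0, hper⟩ := minPeriod_spec hf
  constructor
  · intro h
    have hcard : (((Finset.range (minPeriod f)).filter fun i => f i ≠ 0).card : ℝ) = 0 := by
      unfold density at h
      rcases div_eq_zero_iff.mp h with h' | h'
      · exact h'
      · exact absurd h' (by positivity)
    have hcard' : ((Finset.range (minPeriod f)).filter fun i => f i ≠ 0).card = 0 := by
      exact_mod_cast hcard
    have hzero : ∀ i < minPeriod f, f i = 0 := by
      intro i hi
      by_contra hne
      have hmem : i ∈ (Finset.range (minPeriod f)).filter fun i => f i ≠ 0 :=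
        Finset.mem_filter.mpr ⟨Finset.mem_range.mpr hi, hne⟩
      have := Finset.card_pos.mpr ⟨i, hmem⟩
      omega
    funext n
    have h1 : f n = f (n % minPeriod f) := by
      conv_lhs => rw [show n = n % minPeriod f + minPeriod f * (n / minPeriod f) by
        rw [Nat.mod_add_div]]
      exact (hper.of_dvd ⟨n / minPeriod f, rfl⟩) (n % minPeriod f)
    rw [h1]
    exact hzero _ (Nat.mod_lt n hk0)
  · intro h
    subst h
    exact density_zero

theorem density_add {f g : ℕ → ZMod 2}
    (hf : ∃ k, 0 < k ∧ Periodic2 f k) (hg : ∃ k, 0 < k ∧ Periodic2 g k)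
    (hfg : f * g = 0) : density (f + g) = density f + density g := by
  classical
  obtain ⟨hf0, hfp⟩ := minPeriod_spec hf
  obtain ⟨hg0, hgp⟩ := minPeriod_spec hg
  have hs : ∃ k, 0 < k ∧ Periodic2 (f + g) k := by
    refine ⟨minPeriod f * minPeriod g, Nat.mul_pos hf0 hg0, fun i => ?_⟩
    have h1 := (hfp.of_dvd ⟨minPeriod g, rfl⟩) i
    have h2 := (hgp.of_dvd ⟨minPeriod f, mul_comm _ _⟩) i
    simp [Pi.add_apply, h1, h2]
  obtain ⟨hs0, hsp⟩ := minPeriod_spec hs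
  set kf := minPeriod f
  set kg := minPeriod g
  set ks := minPeriod (f + g)
  set K := kf * (kg * ks) with hK
  have hKf : density f = ((((Finset.range K).filter fun i => f i ≠ 0).card : ℝ)) / (K : ℝ) :=
    density_eq_div hf (kg * ks) (Nat.mul_pos hg0 hs0)
  have hKg : density g = ((((Finset.range K).filter fun i => g i ≠ 0).card : ℝ)) / (K : ℝ) := by
    have h := density_eq_div hg (kf * ks) (Nat.mul_pos hf0 hs0)
    rw [h]
    congr 2 <;> rw [show kg * (kf * ks) = kf * (kg * ks) by ring]
  have hKs : density (f + g)
      = ((((Finset.range K).filter fun i => (f + g) i ≠ 0).card : ℝ)) / (K : ℝ) := by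
    have h := density_eq_div hs (kf * kg) (Nat.mul_pos hf0 hg0)
    rw [h]
    congr 2 <;> rw [show ks * (kf * kg) = kf * (kg * ks) by ring]
  rw [hKf, hKg, hKs, ← add_div]
  congr 1
  rw [Finset.card_filter, Finset.card_filter, Finset.card_filter]
  push_cast
  rw [← Finset.sum_add_distrib]
  apply Finset.sum_congr rfl
  intro i _
  have h0 : f i * g i = 0 := congrFun hfg i
  have key : ∀ u v : ZMod 2, u * v = 0 →
      ((if u + v ≠ 0 then (1:ℕ) else 0)) = (if u ≠ 0 then 1 else 0) + (if v ≠ 0 then 1 else 0) := by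
    decide
  have hkey := key (f i) (g i) h0
  have hfg' : (f + g) i = f i + g i := rfl
  rw [hfg']
  exact_mod_cast hkey

/-- A concrete model of the measure algebra `Stₘ ⊗ H(t)`: `m`-tuples of `t`-periodic
`0,1`-sequences, with `μ(f₁, …, fₘ) = (density f₁ + ⋯ + density fₘ)/m`. -/
def StTensorH (m : ℕ) (t : SteinitzNumber) : MeasureAlgebra where
  carrier := Fin m → ↥(periodicSubring t)
  idem := fun x => funext fun j => Subtype.ext (funext fun i => by
    have h : ∀ a : ZMod 2, a * a = a := by decide
    exact h ((x j).1 i))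
  mu := fun F => (∑ j, density (F j).1) / m
  mu_nonneg := fun F => by
    have h : ∀ j ∈ Finset.univ, 0 ≤ density ((F j).1) := fun j _ => density_nonneg _
    exact div_nonneg (Finset.sum_nonneg h) (Nat.cast_nonneg m)
  mu_eq_zero_iff := fun F => by
    constructor
    · intro h
      rcases Nat.eq_zero_or_pos m with hm | hm
      · subst hm; exact funext fun j => j.elim0
      · have hsum : (∑ j, density (F j).1) = 0 := by
          rcases div_eq_zero_iff.mp h with h' | h'
          · exact h'
          · exact absurd h' (by positivity)
        have hall := (Finset.sum_eq_zero_iff_of_nonneg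
          (fun j _ => density_nonneg ((F j).1))).mp hsum
        funext j
        have hd : density (F j).1 = 0 := hall j (Finset.mem_univ j)
        have hz : (F j).1 = 0 :=
          (density_eq_zero_iff (exists_pos_period_of_mem (F j).2)).mp hd
        exact Subtype.ext hz
    · intro h
      subst h
      show (∑ j : Fin m, density (((0 : Fin m → ↥(periodicSubring t)) j)).1) / m = 0
      have hz : ∀ j ∈ Finset.univ,
          density (((0 : Fin m → ↥(periodicSubring t)) j)).1 = (fun _ : Fin m => (0:ℝ)) j :=
        fun j _ => density_zero
      rw [Finset.sum_congr rfl hz]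
      simp
  mu_add := fun F G hFG => by
    have hrow : ∀ j, density ((F j).1 + (G j).1) = density (F j).1 + density (G j).1 := by
      intro j
      have h0 : (F j).1 * (G j).1 = 0 := congrArg Subtype.val (congrFun hFG j)
      exact density_add (exists_pos_period_of_mem (F j).2)
        (exists_pos_period_of_mem (G j).2) h0
    show (∑ j, density (((F + G) j)).1) / m
        = (∑ j, density ((F j)).1) / m + (∑ j, density ((G j)).1) / m
    rw [← add_div, ← Finset.sum_add_distrib]
    congr 1
    exact Finset.sum_congr rfl fun j _ => hrow j

/-- The Boolean algebra underlying the concrete model of `H(∞) ⊗ H(s)`: families,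
indexed by `ℕ`, of `s`-periodic `0,1`-sequences, with finite support. -/
def finRowsSubring (s : SteinitzNumber) : NonUnitalSubring (ℕ → ℕ → ZMod 2) where
  carrier := {F | (Function.support F).Finite ∧ ∀ i, F i ∈ periodicSubring s}
  zero_mem' := ⟨by simp, fun i => (periodicSubring s).zero_mem⟩
  add_mem' := by
    rintro a b ⟨hfa, ha⟩ ⟨hfb, hb⟩
    refine ⟨(hfa.union hfb).subset (Function.support_add _ _), fun i => ?_⟩
    exact (periodicSubring s).add_mem (ha i) (hb i)
  neg_mem' := by
    rintro a ⟨hfa, ha⟩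
    exact ⟨by simpa using hfa, fun i => (periodicSubring s).neg_mem (ha i)⟩
  mul_mem' := by
    rintro a b ⟨hfa, ha⟩ ⟨hfb, hb⟩
    refine ⟨hfa.subset fun i hi => ?_, fun i => (periodicSubring s).mul_mem (ha i) (hb i)⟩
    simp only [Function.mem_support] at hi ⊢
    intro h0
    exact hi (by show a i * b i = 0; rw [h0, zero_mul])

/-- A concrete model of the measure algebra `H(∞) ⊗ H(s)`, where `H(∞)` is the measure
algebra of finite subsets of a countable set: finitely supported families of `s`-periodic
`0,1`-sequences, with `μ(F) = ∑ᶠ i, density (F i)`. -/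
def HInfTensorHs (s : SteinitzNumber) : MeasureAlgebra where
  carrier := ↥(finRowsSubring s)
  idem := fun x => Subtype.ext (funext fun i => funext fun j => by
    have h : ∀ a : ZMod 2, a * a = a := by decide
    exact h (x.1 i j))
  mu := fun F => ∑ᶠ i, density (F.1 i)
  mu_nonneg := fun F => finsum_nonneg fun i => density_nonneg _
  mu_eq_zero_iff := fun F => by
    have hsupp : Function.support (fun i => density (F.1 i)) ⊆ F.2.1.toFinset := by
      intro i hi
      simp only [Function.mem_support] at hi
      simp only [Set.Finite.coe_toFinset, Function.mem_support]
      intro h0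
      exact hi (by rw [h0]; exact density_zero)
    show (∑ᶠ i, density (F.1 i)) = 0 ↔ F = 0
    rw [finsum_eq_sum_of_support_subset _ hsupp]
    constructor
    · intro h
      have hall := (Finset.sum_eq_zero_iff_of_nonneg
        (fun i _ => density_nonneg (F.1 i))).mp h
      apply Subtype.ext
      funext i
      by_cases hi : i ∈ F.2.1.toFinset
      · have hd := hall i hi
        exact (density_eq_zero_iff (exists_pos_period_of_mem (F.2.2 i))).mp hd
      · simp only [Set.Finite.mem_toFinset, Function.mem_support, not_not] at hi
        rw [hi]
        rfl
    · intro h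
      apply Finset.sum_eq_zero
      intro i _
      have h0 : F.1 i = 0 := by rw [h]; rfl
      rw [h0]
      exact density_zero
  mu_add := fun F G hFG => by
    have hfin : ∀ (X : ↥(finRowsSubring s)),
        (Function.support fun i => density (X.1 i)).Finite := by
      intro X
      apply X.2.1.subset
      intro i hi
      simp only [Function.mem_support] at hi ⊢
      intro h0
      exact hi (by rw [h0]; exact density_zero)
    have hrow : ∀ i, density ((F + G).1 i) = density (F.1 i) + density (G.1 i) := by
      intro i
      have h0 : F.1 i * G.1 i = 0 := congrFun (congrArg Subtype.val hFG) i
      exact density_add (exists_pos_period_of_mem (F.2.2 i))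
        (exists_pos_period_of_mem (G.2.2 i)) h0
    show (∑ᶠ i, density ((F + G).1 i)) = _
    rw [finsum_congr hrow]
    exact finsum_add_distrib (hfin F) (hfin G)


/-!
Let `h ≠ 0`, let `B ∣ s` be a common period of the rows of `h`, and let `a` be the number of
ones of `h` in the window `rows × [0, B)`, so that `μ(h) = a / B`. Then `n ∈ D(H_h)` exactly
when `n ∣ a·m` for some `m` with `B·m ∣ s`. An atom of a copy of `Stₙ` in `H_h` has measure
`μ(h)/n`, and over a common period `B·m` it is a count of ones divided by `B·m`; this gives the
divisibility. Conversely, labelling the `a·m` ones of `h` in `rows × [0, B·m)` with `n` labels,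
each used equally often, cuts `h` into `n` disjoint pieces of equal measure spanning a copy of
`Stₙ`. Taking the least common multiple gives `B · st(H_h) = a · s`, and `(a/b)·s` is attained
by `a` rows with ones at the multiples of `b`.
-/

open Finset

namespace SteinitzNumber

theorem mul_apply (s t : SteinitzNumber) (p : Nat.Primes) : (s * t) p = s p + t p := rfl

theorem ofNat_mul_left_cancel {b : ℕ} {s t : SteinitzNumber} (h : ofNat b * s = ofNat b * t) :
    s = t :=
  funext fun p => (ENat.addLECancellable_of_ne_top (ENat.natCast_ne_top _)).inj.1
    (congrFun h p)

theorem natDvd_one (s : SteinitzNumber) : NatDvd 1 s :=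
  ⟨one_pos, fun p => by simp⟩

theorem natDvd_finset_lcm {ι : Type*} {s : SteinitzNumber} (T : Finset ι) {k : ι → ℕ}
    (h : ∀ i ∈ T, NatDvd (k i) s) : NatDvd (T.lcm k) s := by
  classical
  induction T using Finset.induction_on with
  | empty => simpa using natDvd_one s
  | insert a T _ ih =>
    rw [Finset.lcm_insert]
    exact natDvd_lcm (h a (mem_insert_self a T)) (ih fun i hi => h i (mem_insert_of_mem hi))

theorem NatDvd.mul_prime_pow {B : ℕ} {s : SteinitzNumber} (hB : NatDvd B s) (p : Nat.Primes)
    {j : ℕ} (hj : (B.factorization p : ℕ∞) + j ≤ s p) : NatDvd (B * (p : ℕ) ^ j) s := by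
  have hpj : 0 < (p : ℕ) ^ j := pow_pos p.2.pos j
  refine ⟨Nat.mul_pos hB.1 hpj, fun q => ?_⟩
  rw [Nat.factorization_mul hB.1.ne' hpj.ne', Finsupp.add_apply, p.2.factorization_pow,
    Finsupp.single_apply]
  by_cases hpq : (p : ℕ) = q
  · obtain rfl : p = q := Subtype.ext hpq
    simpa using hj
  · simpa [hpq] using hB.2 q

theorem factorization_add_biSup_eq {a B : ℕ} {s : SteinitzNumber} (ha : 0 < a) (hB : NatDvd B s)
    (p : Nat.Primes) :
    (B.factorization p : ℕ∞) + ⨆ n ∈ {n : ℕ | ∃ m, NatDvd (B * m) s ∧ n ∣ a * m},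
      (n.factorization p : ℕ∞) = a.factorization p + s p := by
  have ha_mem : a ∈ {n : ℕ | ∃ m, NatDvd (B * m) s ∧ n ∣ a * m} :=
    ⟨1, by simpa using hB, by simp⟩
  rw [ENat.add_biSup ⟨a, ha_mem⟩]
  apply le_antisymm
  · refine iSup₂_le fun n ⟨m, hBm, hnm⟩ => ?_
    have hm : 0 < m := Nat.pos_of_mul_pos_left hBm.1
    have hn : n.factorization p ≤ a.factorization p + m.factorization p := by
      rw [← Finsupp.add_apply, ← Nat.factorization_mul ha.ne' hm.ne']
      exact (Nat.factorization_le_iff_dvd (ne_zero_of_dvd_ne_zero (by positivity) hnm)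
        (by positivity)).2 hnm p
    have hBm_p := hBm.2 p
    rw [Nat.factorization_mul hB.1.ne' hm.ne', Finsupp.add_apply, Nat.cast_add] at hBm_p
    calc (B.factorization p : ℕ∞) + n.factorization p
        ≤ B.factorization p + (a.factorization p + m.factorization p) := by
          gcongr; exact_mod_cast hn
      _ = a.factorization p + (B.factorization p + m.factorization p) := by ring
      _ ≤ a.factorization p + s p := by gcongr
  · refine ENat.forall_natCast_le_iff_le.mp fun N hN => ?_
    set j := N - a.factorization p - B.factorization p
    have hj : (B.factorization p : ℕ∞) + j ≤ s p := by
      have hBp := hB.2 p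
      by_cases hs : s p = ⊤
      · simp [hs]
      obtain ⟨S, hS⟩ := ENat.ne_top_iff_exists.mp hs
      rw [← hS] at hN hBp ⊢
      norm_cast at hN hBp ⊢
      omega
    have hmem : a * (p : ℕ) ^ j ∈ {n : ℕ | ∃ m, NatDvd (B * m) s ∧ n ∣ a * m} :=
      ⟨_, hB.mul_prime_pow p hj, dvd_rfl⟩
    refine le_trans ?_ (le_iSup₂_of_le (a * (p : ℕ) ^ j) hmem le_rfl)
    rw [Nat.factorization_mul ha.ne' (pow_pos p.2.pos j).ne', Finsupp.add_apply,
      p.2.factorization_pow, Finsupp.single_eq_same]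
    norm_cast
    omega

end SteinitzNumber

namespace MeasureAlgebra

theorem mu_St_eq_card {n : ℕ} (c : Fin n → ZMod 2) : (St n).mu c = #{g | c g ≠ 0} / n := by
  have hval : ∀ u : ZMod 2, (u.val : ℝ) = if u ≠ 0 then 1 else 0 := by
    intro u
    rcases (by decide : ∀ v : ZMod 2, v = 0 ∨ v = 1) u with rfl | rfl
    · simp
    · simp [ZMod.val_one]
  show (∑ g, ((c g).val : ℝ)) / n = _
  rw [Finset.card_filter, Nat.cast_sum]
  simp only [hval, Nat.cast_ite, Nat.cast_one, Nat.cast_zero]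

theorem mu_St_single {n : ℕ} (g : Fin n) : (St n).mu (Pi.single g 1) = (n : ℝ)⁻¹ := by
  rw [mu_St_eq_card]
  simp [Pi.single_apply, Finset.filter_eq']

theorem injective_of_mu_map {H₁ H₂ : MeasureAlgebra} (φ : H₁.carrier →ₙ+* H₂.carrier)
    (hφ : ∀ x, H₂.mu (φ x) = H₁.mu x) : Function.Injective φ :=
  (injective_iff_map_eq_zero φ).2 fun x hx => by
    rw [← H₁.mu_eq_zero_iff, ← hφ, hx, H₂.mu_eq_zero_iff]

theorem mem_D_of_ringHom {H : MeasureAlgebra} {n : ℕ} (φ : (Fin n → ZMod 2) →ₙ+* H.carrier)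
    (hone : ∀ x, φ 1 * x = x) (hmu : ∀ c, H.mu (φ c) = (St n).mu c) : n ∈ H.D := by
  have hinj : Function.Injective φ := injective_of_mu_map (H₁ := St n) φ hmu
  let E := RingEquiv.ofBijective φ.rangeRestrict
    ⟨fun x y hxy => hinj (congrArg Subtype.val hxy), φ.rangeRestrict_surjective⟩
  refine ⟨φ.range, ⟨φ 1, ⟨1, rfl⟩, hone⟩, E.symm, fun x => ?_⟩
  obtain ⟨c, rfl⟩ := E.surjective x
  exact (congrArg (St n).mu (E.symm_apply_apply c)).trans (hmu c).symm

theorem pos_of_mem_D {H : MeasureAlgebra} [Nontrivial H.carrier] {n : ℕ} (hn : n ∈ H.D) :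
    0 < n := by
  obtain ⟨S, ⟨e, he, hone⟩, φ, -⟩ := hn
  refine Nat.pos_of_ne_zero fun h0 => ?_
  subst h0
  have he0 : (⟨e, he⟩ : S) = 0 := φ.injective (funext fun i => i.elim0)
  obtain ⟨x, hx⟩ := exists_ne (0 : H.carrier)
  exact hx (by rw [← hone x, show e = 0 from congrArg Subtype.val he0, zero_mul])

theorem exists_mu_eq_inv_of_mem_D {H : MeasureAlgebra} {n : ℕ} (hn : n ∈ H.D) (hn0 : 0 < n) :
    ∃ x, H.mu x = (n : ℝ)⁻¹ := by
  obtain ⟨S, -, φ, hφ⟩ := hn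
  refine ⟨(φ.symm (Pi.single ⟨0, hn0⟩ 1)).1, ?_⟩
  exact (hφ _).symm.trans ((congrArg (St n).mu (φ.apply_symm_apply _)).trans (mu_St_single _))

theorem nontrivial_corner {H : MeasureAlgebra} {h : H.carrier} (hh : h ≠ 0) :
    Nontrivial (H.corner h).carrier :=
  ⟨⟨⟨h, H.idem h⟩, 0, fun h0 => hh (congrArg Subtype.val h0)⟩⟩

end MeasureAlgebra

theorem Periodic2.apply_mod {f : ℕ → ZMod 2} {B : ℕ} (h : Periodic2 f B) (j : ℕ) :
    f j = f (j % B) := by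
  conv_lhs => rw [← Nat.mod_add_div j B]
  exact (h.of_dvd ⟨j / B, rfl⟩) (j % B)

theorem density_eq_card_div {f : ℕ → ZMod 2} {K : ℕ} (hK0 : 0 < K) (hK : Periodic2 f K) :
    density f = #{j ∈ range K | f j ≠ 0} / K := by
  obtain ⟨hk0, hk⟩ := minPeriod_spec ⟨K, hK0, hK⟩
  have hcount : minPeriod f * #{j ∈ range K | f j ≠ 0}
      = K * #{j ∈ range (minPeriod f) | f j ≠ 0} := by
    rw [← count_mul_period hK, ← count_mul_period hk, mul_comm]
  rw [density, div_eq_div_iff (by positivity) (by positivity)]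
  norm_cast
  linarith

def windowOnes (F : ℕ → ℕ → ZMod 2) (T : Finset ℕ) (B : ℕ) : Finset (ℕ × ℕ) :=
  {q ∈ T ×ˢ range B | F q.1 q.2 ≠ 0}

theorem card_windowOnes (F : ℕ → ℕ → ZMod 2) (T : Finset ℕ) (B : ℕ) :
    #(windowOnes F T B) = ∑ i ∈ T, #{j ∈ range B | F i j ≠ 0} := by
  simp only [windowOnes, Finset.card_filter, Finset.sum_product]

theorem card_windowOnes_mul {F : ℕ → ℕ → ZMod 2} {T : Finset ℕ} {B : ℕ}
    (hper : ∀ i, Periodic2 (F i) B) (m : ℕ) :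
    #(windowOnes F T (B * m)) = m * #(windowOnes F T B) := by
  simp only [card_windowOnes, count_mul_period (hper _), Finset.mul_sum]

theorem card_windowOnes_pos {F : ℕ → ℕ → ZMod 2} (hF : F ≠ 0) {T : Finset ℕ}
    (hT : ∀ i ∉ T, F i = 0) {B : ℕ} (hB : 0 < B) (hper : ∀ i, Periodic2 (F i) B) :
    0 < #(windowOnes F T B) := by
  obtain ⟨i, j, hij⟩ : ∃ i j, F i j ≠ 0 := by
    by_contra! h
    exact hF (funext fun i => funext (h i))
  refine Finset.card_pos.2 ⟨(i, j % B), ?_⟩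
  simp only [windowOnes, Finset.mem_filter, Finset.mem_product, Finset.mem_range]
  refine ⟨⟨?_, Nat.mod_lt j hB⟩, by rwa [← (hper i).apply_mod]⟩
  by_contra hi
  exact hij (by rw [hT i hi]; rfl)

namespace HInfTensorHs

variable {s : SteinitzNumber}

theorem mu_eq_card_windowOnes (F : (HInfTensorHs s).carrier) {T : Finset ℕ}
    (hT : ∀ i ∉ T, F.1 i = 0) {B : ℕ} (hB : 0 < B) (hper : ∀ i, Periodic2 (F.1 i) B) :
    (HInfTensorHs s).mu F = #(windowOnes F.1 T B) / B := by
  have hsupp : Function.support (fun i => density (F.1 i)) ⊆ T := fun i hi => by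
    by_contra hiT
    exact hi (show density (F.1 i) = 0 by rw [hT i hiT, density_zero])
  show ∑ᶠ i, density (F.1 i) = _
  rw [finsum_eq_sum_of_support_subset _ hsupp, card_windowOnes, Nat.cast_sum, Finset.sum_div]
  exact Finset.sum_congr rfl fun i _ => density_eq_card_div hB (hper i)

theorem card_windowOnes_pos_of_ne_zero {F : (HInfTensorHs s).carrier} (hF : F ≠ 0)
    {T : Finset ℕ} (hT : ∀ i ∉ T, F.1 i = 0) {B : ℕ} (hB : 0 < B)
    (hper : ∀ i, Periodic2 (F.1 i) B) : 0 < #(windowOnes F.1 T B) :=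
  card_windowOnes_pos (fun h0 => hF (Subtype.ext h0)) hT hB hper

theorem exists_common_period (F : (HInfTensorHs s).carrier) {b : ℕ}
    (hb : SteinitzNumber.NatDvd b s) :
    ∃ B, SteinitzNumber.NatDvd B s ∧ b ∣ B ∧ ∀ i, Periodic2 (F.1 i) B := by
  choose k hk hkper using F.2.2
  set T := F.2.1.toFinset
  refine ⟨Nat.lcm b (T.lcm k), SteinitzNumber.natDvd_lcm hb
    (SteinitzNumber.natDvd_finset_lcm T fun i _ => hk i), Nat.dvd_lcm_left _ _, fun i => ?_⟩
  by_cases hi : i ∈ T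
  · exact (hkper i).of_dvd ((Finset.dvd_lcm hi).trans (Nat.dvd_lcm_right _ _))
  · rw [show F.1 i = 0 by simpa [T] using hi]
    exact fun _ => rfl

end HInfTensorHs

theorem exists_labeling_card_fiber_eq {α : Type*} (P : Finset α) {n k : ℕ} (hn : 0 < n)
    (hP : #P = n * k) : ∃ lab : α → Fin n, ∀ g, #{q ∈ P | lab q = g} = k := by
  classical
  let E : P ≃ Fin n × Fin k := (P.equivFin.trans (finCongr hP)).trans finProdFinEquiv.symm
  let lab : α → Fin n := fun q => if hq : q ∈ P then (E ⟨q, hq⟩).1 else ⟨0, hn⟩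
  have lab_symm : ∀ y, lab (E.symm y) = y.1 := fun y => by
    simp only [lab, dif_pos (E.symm y).2, Subtype.coe_eta, Equiv.apply_symm_apply]
  refine ⟨lab, fun g => ?_⟩
  calc #{q ∈ P | lab q = g} = #(univ : Finset (Fin k)) := by
        refine Finset.card_bij' (fun q hq => (E ⟨q, (mem_filter.1 hq).1⟩).2)
          (fun t _ => E.symm (g, t)) (fun _ _ => mem_univ _)
          (fun t _ => mem_filter.2 ⟨(E.symm (g, t)).2, lab_symm _⟩) (fun q hq => ?_)
          (fun t _ => by simp)
        obtain ⟨hqP, hqg⟩ := mem_filter.1 hq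
        simp only [lab, dif_pos hqP] at hqg
        rw [show (g, (E ⟨q, hqP⟩).2) = E ⟨q, hqP⟩ from Prod.ext hqg.symm rfl,
          Equiv.symm_apply_apply]
    _ = k := by simp

theorem card_filter_mem_eq_mul {α β : Type*} [DecidableEq β] {P : Finset α} {lab : α → β}
    {k : ℕ} (hlab : ∀ g, #{q ∈ P | lab q = g} = k) (t : Finset β) :
    #{q ∈ P | lab q ∈ t} = #t * k := by
  rw [card_eq_sum_card_fiberwise (s := {q ∈ P | lab q ∈ t}) (t := t)
      fun q hq => (mem_filter.1 hq).2,
    ← smul_eq_mul, ← sum_const]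
  refine sum_congr rfl fun g hg => ?_
  rw [filter_filter, ← hlab g]
  congr 1
  exact filter_congr fun q _ => ⟨fun h => h.2, fun h => ⟨h ▸ hg, h⟩⟩

theorem zmod_two_mul_self (u : ZMod 2) : u * u = u := by
  revert u; decide

def splitRows {n : ℕ} (F : ℕ → ℕ → ZMod 2) (lab : ℕ × ℕ → Fin n) (B : ℕ)
    (c : Fin n → ZMod 2) : ℕ → ℕ → ZMod 2 :=
  fun i j => F i j * c (lab (i, j % B))

section splitRows

variable {n : ℕ} {F : ℕ → ℕ → ZMod 2} {lab : ℕ × ℕ → Fin n} {B : ℕ}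

theorem splitRows_eq_zero {i : ℕ} (hi : F i = 0) (c : Fin n → ZMod 2) :
    splitRows F lab B c i = 0 :=
  funext fun j => by simp [splitRows, hi]

theorem periodic2_splitRows (hper : ∀ i, Periodic2 (F i) B) (c : Fin n → ZMod 2) (i : ℕ) :
    Periodic2 (splitRows F lab B c i) B := fun j => by
  simp only [splitRows, hper i j, Nat.add_mod_right]

theorem splitRows_mem {s : SteinitzNumber} (hF : F ∈ finRowsSubring s)
    (hB : SteinitzNumber.NatDvd B s) (hper : ∀ i, Periodic2 (F i) B) (c : Fin n → ZMod 2) :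
    splitRows F lab B c ∈ finRowsSubring s :=
  ⟨hF.1.subset fun _ hi h0 => hi (splitRows_eq_zero h0 c),
    fun i => ⟨B, hB, periodic2_splitRows hper c i⟩⟩

theorem mul_splitRows (c : Fin n → ZMod 2) : F * splitRows F lab B c = splitRows F lab B c :=
  funext fun i => funext fun j => by
    simp only [splitRows, Pi.mul_apply, ← mul_assoc, zmod_two_mul_self]

theorem splitRows_add (c c' : Fin n → ZMod 2) :
    splitRows F lab B (c + c') = splitRows F lab B c + splitRows F lab B c' :=
  funext fun _ => funext fun _ => mul_add _ _ _

theorem splitRows_mul (c c' : Fin n → ZMod 2) :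
    splitRows F lab B (c * c') = splitRows F lab B c * splitRows F lab B c' :=
  funext fun i => funext fun j => by
    simp only [splitRows, Pi.mul_apply]
    rw [mul_mul_mul_comm, zmod_two_mul_self]

theorem windowOnes_splitRows (T : Finset ℕ) (c : Fin n → ZMod 2) :
    windowOnes (splitRows F lab B c) T B =
      {q ∈ windowOnes F T B | lab q ∈ ({g | c g ≠ 0} : Finset (Fin n))} := by
  ext ⟨i, j⟩
  simp only [windowOnes, mem_filter, mem_product, mem_range, mem_univ, true_and]
  simp only [splitRows]
  constructor
  · rintro ⟨⟨hi, hj⟩, hne⟩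
    rw [Nat.mod_eq_of_lt hj] at hne
    exact ⟨⟨⟨hi, hj⟩, left_ne_zero_of_mul hne⟩, right_ne_zero_of_mul hne⟩
  · rintro ⟨⟨⟨hi, hj⟩, hF⟩, hc⟩
    rw [Nat.mod_eq_of_lt hj]
    exact ⟨⟨hi, hj⟩, mul_ne_zero hF hc⟩

end splitRows

namespace HInfTensorHs

open MeasureAlgebra SteinitzNumber

variable {s : SteinitzNumber} {h : (HInfTensorHs s).carrier} {T : Finset ℕ} {B : ℕ}

def splitHom {n : ℕ} (h : (HInfTensorHs s).carrier) (lab : ℕ × ℕ → Fin n)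
    (hB : NatDvd B s) (hper : ∀ i, Periodic2 (h.1 i) B) :
    (Fin n → ZMod 2) →ₙ+* ((HInfTensorHs s).corner h).carrier where
  toFun c := ⟨⟨splitRows h.1 lab B c, splitRows_mem h.2 hB hper c⟩,
    Subtype.ext (mul_splitRows c)⟩
  map_zero' := Subtype.ext <| Subtype.ext <| funext fun _ => funext fun _ => mul_zero _
  map_add' c c' := Subtype.ext <| Subtype.ext <| splitRows_add c c'
  map_mul' c c' := Subtype.ext <| Subtype.ext <| splitRows_mul c c'

theorem splitHom_one_mul {n : ℕ} (lab : ℕ × ℕ → Fin n) (hB : NatDvd B s)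
    (hper : ∀ i, Periodic2 (h.1 i) B) (x : ((HInfTensorHs s).corner h).carrier) :
    splitHom h lab hB hper 1 * x = x := by
  have hx : h.1 * x.1.1 = x.1.1 := congrArg Subtype.val x.2
  refine Subtype.ext (Subtype.ext ?_)
  funext i j
  show h.1 i j * 1 * x.1.1 i j = x.1.1 i j
  rw [mul_one]
  exact congrFun (congrFun hx i) j

theorem mu_splitHom (hh : h ≠ 0) (hT : ∀ i ∉ T, h.1 i = 0) (hB : NatDvd B s)
    (hper : ∀ i, Periodic2 (h.1 i) B) {n k : ℕ} {lab : ℕ × ℕ → Fin n}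
    (hlab : ∀ g, #{q ∈ windowOnes h.1 T B | lab q = g} = k) (c : Fin n → ZMod 2) :
    ((HInfTensorHs s).corner h).mu (splitHom h lab hB hper c) = (St n).mu c := by
  have hP : #(windowOnes h.1 T B) = n * k := by
    simpa using card_filter_mem_eq_mul hlab univ
  have hnk : n * k ≠ 0 :=
    hP ▸ (card_windowOnes_pos_of_ne_zero hh hT hB.1 hper).ne'
  have hn : (n : ℝ) ≠ 0 := Nat.cast_ne_zero.2 (left_ne_zero_of_mul hnk)
  have hk : (k : ℝ) ≠ 0 := Nat.cast_ne_zero.2 (right_ne_zero_of_mul hnk)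
  have hB0 : (B : ℝ) ≠ 0 := Nat.cast_ne_zero.2 hB.1.ne'
  show (HInfTensorHs s).mu _ / (HInfTensorHs s).mu h = _
  rw [mu_eq_card_windowOnes _ (fun i hi => splitRows_eq_zero (hT i hi) c) hB.1
      (periodic2_splitRows hper c),
    mu_eq_card_windowOnes h hT hB.1 hper, mu_St_eq_card]
  rw [show windowOnes (splitHom h lab hB hper c).1.1 T B = _ from windowOnes_splitRows T c,
    card_filter_mem_eq_mul hlab, hP]
  push_cast
  field_simp

theorem mem_D_corner_of_dvd (hh : h ≠ 0) (hT : ∀ i ∉ T, h.1 i = 0) (hB : NatDvd B s)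
    (hper : ∀ i, Periodic2 (h.1 i) B) {n : ℕ} (hn : n ∣ #(windowOnes h.1 T B)) :
    n ∈ ((HInfTensorHs s).corner h).D := by
  obtain ⟨k, hk⟩ := hn
  have hn0 : 0 < n :=
    Nat.pos_of_mul_pos_right (hk ▸ card_windowOnes_pos_of_ne_zero hh hT hB.1 hper)
  obtain ⟨lab, hlab⟩ := exists_labeling_card_fiber_eq _ hn0 hk
  exact mem_D_of_ringHom (splitHom h lab hB hper) (splitHom_one_mul lab hB hper)
    (mu_splitHom hh hT hB hper hlab)

theorem dvd_of_mem_D_corner (hh : h ≠ 0) (hT : ∀ i ∉ T, h.1 i = 0) (hB : NatDvd B s)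
    (hper : ∀ i, Periodic2 (h.1 i) B) {n : ℕ} (hn : n ∈ ((HInfTensorHs s).corner h).D) :
    ∃ m, NatDvd (B * m) s ∧ n ∣ #(windowOnes h.1 T B) * m := by
  have := nontrivial_corner hh
  have hn0 := pos_of_mem_D hn
  obtain ⟨x, hx⟩ := exists_mu_eq_inv_of_mem_D hn hn0
  have hxT : ∀ i ∉ T, x.1.1 i = 0 := fun i hi => by
    rw [← congrArg Subtype.val x.2]
    exact funext fun j => show h.1 i j * x.1.1 i j = 0 by simp [hT i hi]
  obtain ⟨_, hBm, ⟨m, rfl⟩, hGper⟩ := exists_common_period x.1 hB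
  refine ⟨m, hBm, #(windowOnes x.1.1 T (B * m)), ?_⟩
  change (HInfTensorHs s).mu x.1 / (HInfTensorHs s).mu h = _ at hx
  rw [mu_eq_card_windowOnes _ hxT hBm.1 hGper, mu_eq_card_windowOnes h hT hB.1 hper] at hx
  have ha : (#(windowOnes h.1 T B) : ℝ) ≠ 0 := Nat.cast_ne_zero.2
    (card_windowOnes_pos_of_ne_zero hh hT hB.1 hper).ne'
  have hB0 : (B : ℝ) ≠ 0 := Nat.cast_ne_zero.2 hB.1.ne'
  have hn : (n : ℝ) ≠ 0 := Nat.cast_ne_zero.2 hn0.ne'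
  have hm : (m : ℝ) ≠ 0 := Nat.cast_ne_zero.2 (Nat.pos_of_mul_pos_left hBm.1).ne'
  push_cast at hx
  field_simp at hx
  have key : (#(windowOnes h.1 T B) * m : ℝ) = n * #(windowOnes x.1.1 T (B * m)) := by
    linarith
  exact_mod_cast key

theorem mem_D_corner_iff (hh : h ≠ 0) (hT : ∀ i ∉ T, h.1 i = 0) (hB : NatDvd B s)
    (hper : ∀ i, Periodic2 (h.1 i) B) {n : ℕ} :
    n ∈ ((HInfTensorHs s).corner h).D ↔
      ∃ m, NatDvd (B * m) s ∧ n ∣ #(windowOnes h.1 T B) * m := by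
  refine ⟨dvd_of_mem_D_corner hh hT hB hper, fun ⟨m, hBm, hn⟩ => ?_⟩
  refine mem_D_corner_of_dvd hh hT hBm (fun i => (hper i).of_dvd (dvd_mul_right B m)) ?_
  rwa [card_windowOnes_mul hper, mul_comm]

theorem ofNat_mul_st_corner (hh : h ≠ 0) (hT : ∀ i ∉ T, h.1 i = 0) (hB : NatDvd B s)
    (hper : ∀ i, Periodic2 (h.1 i) B) :
    ofNat B * ((HInfTensorHs s).corner h).st = ofNat #(windowOnes h.1 T B) * s := by
  have hD : ((HInfTensorHs s).corner h).D =
      {n | ∃ m, NatDvd (B * m) s ∧ n ∣ #(windowOnes h.1 T B) * m} :=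
    Set.ext fun _ => mem_D_corner_iff hh hT hB hper
  funext p
  rw [mul_apply, mul_apply, st, hD]
  exact factorization_add_biSup_eq
    (card_windowOnes_pos_of_ne_zero hh hT hB.1 hper) hB p

end HInfTensorHs

def multiplesIndicator (a b : ℕ) : ℕ → ℕ → ZMod 2 :=
  fun i j => if i < a ∧ b ∣ j then 1 else 0

section multiplesIndicator

variable {a b : ℕ}

theorem multiplesIndicator_of_le {i : ℕ} (hi : a ≤ i) : multiplesIndicator a b i = 0 :=
  funext fun _ => if_neg fun h => (h.1.trans_le hi).false

theorem periodic2_multiplesIndicator (i : ℕ) : Periodic2 (multiplesIndicator a b i) b :=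
  fun j => by simp only [multiplesIndicator, Nat.dvd_add_self_right]

theorem multiplesIndicator_mem {s : SteinitzNumber} (hb : SteinitzNumber.NatDvd b s) :
    multiplesIndicator a b ∈ finRowsSubring s :=
  ⟨(Set.finite_Iio a).subset fun _ hi =>
      lt_of_not_ge fun hai => hi (multiplesIndicator_of_le hai),
    fun i => ⟨b, hb, periodic2_multiplesIndicator i⟩⟩

theorem multiplesIndicator_ne_zero (ha : 0 < a) : multiplesIndicator a b ≠ 0 := fun h0 => by
  simpa [multiplesIndicator, ha] using congrFun (congrFun h0 0) 0

theorem card_windowOnes_multiplesIndicator (hb : 0 < b) :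
    #(windowOnes (multiplesIndicator a b) (range a) b) = a := by
  rw [show windowOnes (multiplesIndicator a b) (range a) b = range a ×ˢ {0} from ?_,
    card_product, card_range, card_singleton, mul_one]
  ext ⟨i, j⟩
  simp only [windowOnes, mem_filter, mem_product, mem_range, mem_singleton]
  simp only [multiplesIndicator]
  constructor
  · rintro ⟨⟨hi, hj⟩, hne⟩
    split_ifs at hne with h
    · exact ⟨hi, Nat.eq_zero_of_dvd_of_lt h.2 hj⟩
    · exact absurd rfl hne
  · rintro ⟨hi, rfl⟩
    simp [hi, hb]

end multiplesIndicator

/-- For a Steinitz number `s`, `Spec(H(∞) ⊗ H(s)) = S(∞, s) = { (a/b)·s : a ∈ ℕ, b ∈ Ω(s) }`. -/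
theorem spec_HInfTensorHs (s : SteinitzNumber) :
    (HInfTensorHs s).Spec = SteinitzNumber.SInf s := by
  ext t
  constructor
  · rintro ⟨h, hh, rfl⟩
    obtain ⟨B, hB, -, hper⟩ :=
      HInfTensorHs.exists_common_period h (SteinitzNumber.natDvd_one s)
    have hT : ∀ i ∉ h.2.1.toFinset, h.1 i = 0 := by simp
    exact ⟨_, B, HInfTensorHs.card_windowOnes_pos_of_ne_zero hh hT hB.1 hper, hB,
      HInfTensorHs.ofNat_mul_st_corner hh hT hB hper⟩
  · rintro ⟨a, b, ha, hb, hab⟩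
    let h : (HInfTensorHs s).carrier := ⟨multiplesIndicator a b, multiplesIndicator_mem hb⟩
    have hh : h ≠ 0 := fun h0 => multiplesIndicator_ne_zero ha (congrArg Subtype.val h0)
    refine ⟨h, hh, SteinitzNumber.ofNat_mul_left_cancel (b := b) ?_⟩
    rw [hab, HInfTensorHs.ofNat_mul_st_corner (T := range a) hh
      (fun i hi => multiplesIndicator_of_le (not_lt.1 (mem_range.not.1 hi))) hb
      periodic2_multiplesIndicator, card_windowOnes_multiplesIndicator hb.1]
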